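/- arXiv:1101.0085 — 5 statements merged into one kernel-verified Lean document; each statement's English description precedes it below -/
import Mathlib

section
/- Let A be a finite ring and f : A^s → B a target function. If f is semi-injective (there exists x ∈ A^s with f⁻¹({f(x)}) = {x}), then f is not reducible. -/
/-- A target function `f : A^s → B` is *reducible* if there exist `l < s`,
an `s × l` matrix `T` over `A`, and `g : A^l → B` with `g (x * T) = f x`. -/
def Reducible {A B : Type*} [Ring A] (s : ℕ) (f : (Fin s → A) → B) : Prop :=
  ∃ l : ℕ, l < s ∧ ∃ T : Matrix (Fin s) (Fin l) A, ∃ g : (Fin l → A) → B,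
    ∀ x : Fin s → A, g (Matrix.vecMul x T) = f x

/-- `f` is *semi-injective* if some point is the unique preimage of its image. -/
def SemiInjective {A B : Type*} (s : ℕ) (f : (Fin s → A) → B) : Prop :=
  ∃ x : Fin s → A, f ⁻¹' {f x} = {x}

/-- Semi-injective target functions over a finite ring are not reducible. -/
theorem semiInjective_not_reducible {A B : Type*} [Ring A] [Fintype A] [Nontrivial A]
    (s : ℕ) (f : (Fin s → A) → B) (hf : SemiInjective s f) :
    ¬ Reducible s f := by
  obtain ⟨x0, hx0⟩ := hf
  rintro ⟨l, hl, T, g, hg⟩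
  have hcard : Fintype.card (Fin l → A) < Fintype.card (Fin s → A) := by
    simp only [Fintype.card_fun, Fintype.card_fin]
    exact Nat.pow_lt_pow_right Fintype.one_lt_card hl
  obtain ⟨x, y, hxy, heq⟩ :=
    Fintype.exists_ne_map_eq_of_card_lt (fun v : Fin s → A => Matrix.vecMul v T) hcard
  set d : Fin s → A := x - y with hd
  have hdT : Matrix.vecMul d T = 0 := by
    rw [hd, Matrix.sub_vecMul, heq, sub_self]
  have hmem : x0 + d ∈ f ⁻¹' {f x0} := by
    have : f (x0 + d) = f x0 := by
      rw [← hg, ← hg x0, Matrix.add_vecMul, hdT, add_zero]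
    simpa [Set.mem_preimage] using this
  rw [hx0] at hmem
  have : d = 0 := by
    have h := Set.mem_singleton_iff.mp hmem
    simpa using h
  exact hxy (sub_eq_zero.mp (hd ▸ this))
end

section
/- Let F be a finite field, s ≥ 1, and f : F^s → B. Then f is reducible if and only if there exists a nonzero d ∈ F^s such that f(a·d + x) = f(x) for all a ∈ F and all x ∈ F^s. -/
/-!
If `f = g ∘ (· ᵥ* T)` with `T` of size `s × l`, `l < s`, then `x ↦ x ᵥ* T` has a nonzero kernel
vector `d`, and `f` is constant along `d`. Conversely, if `f` is constant along `d ≠ 0`, it is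
constant on the cosets of the line `F ∙ d`, so it factors through a linear map `F^s → F^(s-1)`
with kernel `F ∙ d`, namely the quotient map followed by a coordinate system of the quotient.
-/

open Module Submodule
open scoped Matrix

section Ring

variable {R V W B : Type*} [Ring R] [AddCommGroup V] [Module R V] [AddCommGroup W] [Module R W]

theorem LinearMap.exists_comp_eq_of_forall_mem_ker (φ : V →ₗ[R] W) (f : V → B)
    (hf : ∀ v ∈ LinearMap.ker φ, ∀ x, f (v + x) = f x) :
    ∃ g : W → B, ∀ x, g (φ x) = f x := by
  have hfactor : f.FactorsThrough φ := fun x y hxy => by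
    have hker : x - y ∈ LinearMap.ker φ := by simp [hxy]
    simpa using hf _ hker y
  exact ⟨Function.extend φ f (fun _ => f 0), hfactor.extend_apply _⟩

theorem LinearMap.map_smul_add_of_mem_ker (φ : V →ₗ[R] W) {d : V} (hd : d ∈ LinearMap.ker φ)
    (a : R) (x : V) : φ (a • d + x) = φ x := by
  simp [LinearMap.mem_ker.mp hd]

end Ring

section DivisionRing

variable {K V : Type*} [DivisionRing K] [AddCommGroup V] [Module K V] [FiniteDimensional K V]

theorem Submodule.exists_linearMap_fin_ker_eq (W : Submodule K V) :
    ∃ φ : V →ₗ[K] (Fin (finrank K (V ⧸ W)) → K), LinearMap.ker φ = W :=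
  ⟨(finBasis K (V ⧸ W)).equivFun.toLinearMap ∘ₗ W.mkQ, by
    rw [LinearEquiv.ker_comp, ker_mkQ]⟩

theorem Submodule.finrank_quotient_lt {W : Submodule K V} (hW : W ≠ ⊥) :
    finrank K (V ⧸ W) < finrank K V := by
  rw [← W.finrank_quotient_add_finrank]
  have := Submodule.one_le_finrank_iff.mpr hW
  omega

end DivisionRing

theorem Matrix.vecMul_transpose_toMatrix' {R : Type*} [CommRing R] {m n : ℕ}
    (φ : (Fin m → R) →ₗ[R] (Fin n → R)) (x : Fin m → R) :
    x ᵥ* (LinearMap.toMatrix' φ)ᵀ = φ x := by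
  rw [Matrix.vecMul_transpose, LinearMap.toMatrix'_mulVec]

theorem reducible_iff_exists_invariant_direction_general (F B : Type*) [Field F]
    (s : ℕ) (f : (Fin s → F) → B) :
    Reducible s f ↔
      ∃ d : Fin s → F, d ≠ 0 ∧ ∀ (a : F) (x : Fin s → F), f (a • d + x) = f x := by
  constructor
  · rintro ⟨l, hl, T, g, hg⟩
    have hker : LinearMap.ker (Matrix.vecMulLinear T) ≠ ⊥ :=
      LinearMap.ker_ne_bot_of_finrank_lt (by simpa using hl)
    obtain ⟨d, hdker, hd⟩ := Submodule.exists_mem_ne_zero_of_ne_bot hker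
    refine ⟨d, hd, fun a x => ?_⟩
    simpa only [← hg, Matrix.vecMulLinear_apply] using
      congrArg g (LinearMap.map_smul_add_of_mem_ker _ hdker a x)
  · rintro ⟨d, hd, hinv⟩
    obtain ⟨φ, hφ⟩ := (F ∙ d).exists_linearMap_fin_ker_eq
    obtain ⟨g, hg⟩ := LinearMap.exists_comp_eq_of_forall_mem_ker φ f fun v hv x => by
      obtain ⟨a, rfl⟩ := mem_span_singleton.mp (hφ ▸ hv)
      exact hinv a x
    have hl := finrank_quotient_lt ((span_singleton_eq_bot (R := F)).not.mpr hd)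
    rw [finrank_fin_fun] at hl
    exact ⟨_, hl, (LinearMap.toMatrix' φ)ᵀ, g, fun x => by
      rw [Matrix.vecMul_transpose_toMatrix', hg]⟩

/-- Over a finite field, `f : F^s → B` is reducible iff there is a nonzero
direction `d` such that `f` is invariant under translation by all multiples of `d`. -/
theorem reducible_iff_exists_invariant_direction (F B : Type*) [Field F] [Fintype F]
    (s : ℕ) (hs : 1 ≤ s) (f : (Fin s → F) → B) :
    Reducible s f ↔
      ∃ d : Fin s → F, d ≠ 0 ∧ ∀ (a : F) (x : Fin s → F), f (a • d + x) = f x :=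
  reducible_iff_exists_invariant_direction_general F B s f
end

section
/- Let A = ℤ/4ℤ and f : A² → {0,1,2} with f(x₁,x₂) equal to the Hamming distance between the 2-bit binary representations of x₁ and x₂ (explicitly: f(x,x)=0; f(0,1)=f(0,2)=f(1,3)=f(2,3)=1 and symmetric, f(0,3)=f(1,2)=2 and symmetric). Suppose M₁, M₂ are k×n matrices over ℤ/4ℤ and ψ : (ℤ/4ℤ)ⁿ → {0,1,2}^k satisfy ψ(xM₁ + yM₂)ⱼ = f(xⱼ, yⱼ) for all x, y ∈ (ℤ/4ℤ)^k and all j. Then k/n ≤ 2/3. -/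
/-- The target function on `ℤ/4ℤ × ℤ/4ℤ`: the Hamming distance between the
2-bit binary representations (table: `f(a,a)=0`; `f(a,b)=2` if `a+b=3`, `a≠b`;
otherwise `1`). -/
def f4 (a b : ZMod 4) : ℕ :=
  if a = b then 0 else if a + b = 3 then 2 else 1

lemma f4_key : ∀ d e : ZMod 4,
    (∀ u v : ZMod 4, f4 (u + d) (v + e) = f4 u v) → d = e ∧ (d = 0 ∨ d = 2) := by
  decide

lemma zmod4_split : ∀ p p' : ZMod 4, (p - p' = 0 ∨ p - p' = 2) →
    (decide (p.val < 2) = decide (p'.val < 2)) → p = p' := by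
  decide

/-- Any `(k,n)` linear code over `ℤ/4ℤ` computing `f4` in the two-source network
`𝒩₁` satisfies `k/n ≤ 2/3`. -/
theorem zmod4_linear_rate_le (k n : ℕ)
    (M₁ M₂ : Matrix (Fin k) (Fin n) (ZMod 4))
    (ψ : (Fin n → ZMod 4) → Fin k → ℕ)
    (hcode : ∀ (x y : Fin k → ZMod 4) (j : Fin k),
      ψ (Matrix.vecMul x M₁ + Matrix.vecMul y M₂) j = f4 (x j) (y j)) :
    3 * k ≤ 2 * n := by
  set Ψ : ((Fin k → ZMod 4) × (Fin k → ZMod 4)) → (Fin n → ZMod 4) × (Fin k → Bool) :=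
    fun p => (Matrix.vecMul p.1 M₁ + Matrix.vecMul p.2 M₂,
      fun j => decide ((p.1 j).val < 2)) with hΨdef
  have hinj : Function.Injective Ψ := by
    rintro ⟨x, y⟩ ⟨x', y'⟩ h
    simp only [hΨdef, Prod.mk.injEq] at h
    obtain ⟨h1, h2⟩ := h
    have hxy : ∀ (a b : Fin k → ZMod 4) (j : Fin k),
        f4 (a j + x j) (b j + y j) = f4 (a j + x' j) (b j + y' j) := by
      intro a b j
      have e1 := hcode (a + x) (b + y) j
      have e2 := hcode (a + x') (b + y') j
      have harg : Matrix.vecMul (a + x) M₁ + Matrix.vecMul (b + y) M₂ =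
          Matrix.vecMul (a + x') M₁ + Matrix.vecMul (b + y') M₂ := by
        simp only [Matrix.add_vecMul]
        linear_combination h1
      simp only [Pi.add_apply] at e1 e2
      rw [← e1, ← e2, harg]
    have hmain : ∀ j : Fin k, x j - x' j = y j - y' j ∧
        (x j - x' j = 0 ∨ x j - x' j = 2) := by
      intro j
      apply f4_key
      intro u v
      have := hxy (fun _ => u - x' j) (fun _ => v - y' j) j
      have ha : u - x' j + x j = u + (x j - x' j) := by ring
      have hb : v - y' j + y j = v + (y j - y' j) := by ring
      have hc : u - x' j + x' j = u := by ring
      have hd : v - y' j + y' j = v := by ring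
      rwa [ha, hb, hc, hd] at this
    have hx : x = x' := by
      funext j
      exact zmod4_split _ _ (hmain j).2 (congrFun h2 j)
    have hy : y = y' := by
      funext j
      have h := (hmain j).1
      rw [hx] at h
      simp only [sub_self] at h
      have : y j - y' j = 0 := h.symm
      linear_combination this
    exact Prod.ext hx hy
  have hcard := Fintype.card_le_of_injective Ψ hinj
  simp only [Fintype.card_prod, Fintype.card_fun, Fintype.card_fin, ZMod.card,
    Fintype.card_bool] at hcard
  have h2 : (2:ℕ) ^ (2*k + 2*k) ≤ 2 ^ (2*n + k) := by
    have h4 : (4:ℕ) = 2 ^ 2 := rfl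
    rw [h4, ← pow_mul, ← pow_mul] at hcard
    rw [← pow_add, ← pow_add] at hcard
    exact hcard
  have := (Nat.pow_le_pow_iff_right one_lt_two).mp h2
  omega
end

section
/- Let A = ℤ/4ℤ with f as in the Hamming-distance table. Suppose M₁, M₂ ∈ (ℤ/4ℤ)^{k×n} and ψ satisfy ψ(xM₁ + yM₂)ⱼ = f(xⱼ,yⱼ) for all x,y ∈ (ℤ/4ℤ)^k and j ∈ {1,…,k}. If xM₁ + yM₂ = 0, then x = y and every component of x lies in {0,2}. -/
/-- For any `(k,n)` linear code over `ℤ/4ℤ` computing `f4`, if the received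
vector is zero then the two message vectors are equal with all components in
`{0, 2}`. -/
theorem zmod4_zero_received (k n : ℕ)
    (M₁ M₂ : Matrix (Fin k) (Fin n) (ZMod 4))
    (ψ : (Fin n → ZMod 4) → Fin k → ℕ)
    (hcode : ∀ (x y : Fin k → ZMod 4) (j : Fin k),
      ψ (Matrix.vecMul x M₁ + Matrix.vecMul y M₂) j = f4 (x j) (y j))
    (x y : Fin k → ZMod 4)
    (hzero : Matrix.vecMul x M₁ + Matrix.vecMul y M₂ = 0) :
    x = y ∧ ∀ j : Fin k, x j = 0 ∨ x j = 2 := by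
  have hcases : ∀ a : ZMod 4, a = 0 ∨ a = 1 ∨ a = 2 ∨ a = 3 := by decide
  have hxy : x = y := by
    funext j
    have h1 := hcode x y j
    rw [hzero] at h1
    have h0 := hcode 0 0 j
    simp only [Matrix.zero_vecMul, add_zero] at h0
    have key : f4 (x j) (y j) = f4 0 0 := by rw [← h1, h0]; simp
    revert key
    rcases hcases (x j) with h|h|h|h <;> rcases hcases (y j) with h'|h'|h'|h' <;>
      simp [h, h', f4] <;> decide
  refine ⟨hxy, fun j => ?_⟩
  have hM : Matrix.vecMul x M₁ + Matrix.vecMul x M₂ = 0 := by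
    rw [hxy] at hzero ⊢; exact hzero
  have hA := hcode x 0 j
  have hB := hcode 0 (-x) j
  have hneg : Matrix.vecMul (-x) M₂ = Matrix.vecMul x M₁ := by
    rw [Matrix.neg_vecMul]
    exact neg_eq_of_add_eq_zero_left hM
  simp only [Matrix.zero_vecMul, add_zero, zero_add, hneg, Pi.zero_apply, Pi.neg_apply] at hA hB
  have key : f4 (x j) 0 = f4 0 (-x j) := by
    rw [← hA, ← hB]
  revert key
  rcases hcases (x j) with h|h|h|h <;> simp [h, f4] <;> decide
end

section
/- Let F be a field and g ∈ F[x₁,…,x_m] a polynomial of total degree Σᵢ tᵢ such that the coefficient of ∏ᵢ xᵢ^{tᵢ} in g is nonzero. If S₁,…,S_m ⊆ F satisfy |Sᵢ| > tᵢ for all i, then there exist sᵢ ∈ Sᵢ with g(s₁,…,s_m) ≠ 0. -/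
open MvPolynomial

namespace CNAux

variable {F : Type*} [Field F] {m : ℕ}

/-- The substitution `Xᵢ ↦ a`. -/
noncomputable def cnF (i : Fin m) (a : F) : Fin m → MvPolynomial (Fin m) F :=
  fun j => if j = i then C a else X j

lemma cn_dvd (i : Fin m) (a : F) (g : MvPolynomial (Fin m) F) :
    (X i - C a) ∣ g - bind₁ (cnF i a) g := by
  induction g using MvPolynomial.induction_on with
  | C c => simp [cnF]
  | add p q hp hq =>
      have : p + q - bind₁ (cnF i a) (p + q)
          = (p - bind₁ (cnF i a) p) + (q - bind₁ (cnF i a) q) := by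
        rw [map_add]; ring
      rw [this]; exact dvd_add hp hq
  | mul_X p j hp =>
      obtain ⟨c, hc⟩ := hp
      rw [map_mul, bind₁_X_right]
      by_cases hj : j = i
      · subst hj
        refine ⟨c * X j + bind₁ (cnF j a) p, ?_⟩
        have he : cnF j a j = C a := by simp [cnF]
        rw [he]
        linear_combination (X j : MvPolynomial (Fin m) F) * hc
      · refine ⟨c * X j, ?_⟩
        have he : cnF i a j = X j := by simp [cnF, hj]
        rw [he]
        linear_combination (X j : MvPolynomial (Fin m) F) * hc

lemma cn_td (i : Fin m) (a : F) (g : MvPolynomial (Fin m) F) :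
    (bind₁ (cnF i a) g).totalDegree ≤ g.totalDegree := by
  conv_lhs => rw [g.as_sum, map_sum]
  refine (totalDegree_finset_sum _ _).trans ?_
  apply Finset.sup_le
  intro d hd
  rw [bind₁_monomial]
  refine (totalDegree_mul _ _).trans ?_
  rw [totalDegree_C, zero_add]
  refine (totalDegree_finset_prod _ _).trans ?_
  have step : ∀ j ∈ d.support, (cnF i a j ^ d j).totalDegree ≤ d j := by
    intro j _
    refine (totalDegree_pow _ _).trans ?_
    have h1 : (cnF i a j).totalDegree ≤ 1 := by
      unfold cnF; split
      · simp
      · exact le_of_eq (totalDegree_X _)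
    calc d j * (cnF i a j).totalDegree ≤ d j * 1 := Nat.mul_le_mul_left _ h1
      _ = d j := Nat.mul_one _
  calc ∑ j ∈ d.support, (cnF i a j ^ d j).totalDegree
      ≤ ∑ j ∈ d.support, d j := Finset.sum_le_sum step
    _ = d.sum fun _ e => e := rfl
    _ ≤ g.totalDegree := le_totalDegree hd

lemma cn_coeff {i : Fin m} (a : F) {g : MvPolynomial (Fin m) F} {d : Fin m →₀ ℕ}
    (hdi : d i ≠ 0) : coeff d (bind₁ (cnF i a) g) = 0 := by
  by_contra hne
  have hd : d ∈ (bind₁ (cnF i a) g).support := mem_support_iff.mpr hne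
  have hi : i ∈ (bind₁ (cnF i a) g).vars := (mem_vars i).mpr ⟨d, hd, Finsupp.mem_support_iff.mpr hdi⟩
  have := vars_bind₁ (cnF i a) g hi
  rw [Finset.mem_biUnion] at this
  obtain ⟨j, _, hj⟩ := this
  unfold cnF at hj
  split at hj
  · simp [vars_C] at hj
  · rw [vars_X] at hj
    simp at hj
    omega  -- j ≠ i but i ∈ {j}
    
lemma cn_eval (i : Fin m) (a : F) (g : MvPolynomial (Fin m) F) (s : Fin m → F) :
    eval s (bind₁ (cnF i a) g) = eval (Function.update s i a) g := by
  have h1 : (aeval s) (bind₁ (cnF i a) g) = aeval (fun j => aeval s (cnF i a j)) g :=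
    aeval_bind₁ s (cnF i a) g
  have h2 : (fun j => aeval s (cnF i a j)) = Function.update s i a := by
    funext j
    by_cases hj : j = i
    · subst hj; simp [cnF]
    · simp [cnF, hj, Function.update_of_ne hj]
  rw [h2] at h1
  simpa using h1

lemma td_mul_X {h : MvPolynomial (Fin m) F} (hh : h ≠ 0) (i : Fin m) :
    h.totalDegree + 1 ≤ (h * X i).totalDegree := by
  obtain ⟨d₀, hmem, hd₀⟩ := Finset.exists_mem_eq_sup h.support
    (support_nonempty.mpr hh) (fun d => d.sum fun _ e => e)
  have hmem' : d₀ + Finsupp.single i 1 ∈ (h * X i).support := by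
    rw [support_mul_X, Finset.mem_map]
    exact ⟨d₀, hmem, rfl⟩
  have : ((d₀ + Finsupp.single i 1).sum fun _ e => e) = (d₀.sum fun _ e => e) + 1 := by
    rw [Finsupp.sum_add_index' (fun _ => rfl) (fun _ _ _ => rfl),
      Finsupp.sum_single_index rfl]
  have h3 := le_totalDegree hmem'
  rw [this] at h3
  rw [totalDegree, hd₀]
  exact h3


lemma cn_main : ∀ (n : ℕ) (g : MvPolynomial (Fin m) F) (t : Fin m → ℕ) (S : Fin m → Finset F),
    g.totalDegree ≤ n → ∑ i, t i = n →
    coeff (Finsupp.equivFunOnFinite.symm t) g ≠ 0 →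
    (∀ i, t i < (S i).card) →
    ∃ s : Fin m → F, (∀ i, s i ∈ S i) ∧ eval s g ≠ 0 := by
  intro n
  induction n with
  | zero =>
    intro g t S hle hsum hcoeff hS
    have ht : ∀ i, t i = 0 := fun i =>
      (Finset.sum_eq_zero_iff.mp hsum) i (Finset.mem_univ i)
    have htf : (Finsupp.equivFunOnFinite.symm t) = 0 := by
      ext i; simpa using ht i
    have h0 : g.totalDegree = 0 := Nat.le_zero.mp hle
    have hg : g = C (coeff 0 g) := by
      ext d
      by_cases hd : d = 0
      · subst hd; simp [coeff_C]
      · have hz : coeff d g = 0 := by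
          by_contra hne
          apply hd
          ext x
          exact (totalDegree_eq_zero_iff _ g).mp h0 d (mem_support_iff.mpr hne) x
        rw [hz, coeff_C, if_neg (fun he => hd he.symm)]
    have hne : ∀ i, (S i).Nonempty := fun i =>
      Finset.card_pos.mp (lt_of_le_of_lt (Nat.zero_le _) (hS i))
    refine ⟨fun i => (hne i).choose, fun i => (hne i).choose_spec, ?_⟩
    rw [hg, eval_C]
    rw [htf] at hcoeff
    exact hcoeff
  | succ n ih =>
    intro g t S hle hsum hcoeff hS
    classical
    obtain ⟨i, -, hti⟩ := Finset.exists_ne_zero_of_sum_ne_zero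
      (s := Finset.univ) (f := t) (by rw [hsum]; exact Nat.succ_ne_zero n)
    obtain ⟨a, ha⟩ : (S i).Nonempty :=
      Finset.card_pos.mp (lt_of_le_of_lt (Nat.zero_le _) (hS i))
    set tf := Finsupp.equivFunOnFinite.symm t with htfdef
    have htfi : ∀ j, tf j = t j := fun j => rfl
    -- facts about the substituted polynomial
    have hcr : coeff tf (bind₁ (cnF i a) g) = 0 := cn_coeff a (by rw [htfi]; exact hti)
    have hrtd : (bind₁ (cnF i a) g).totalDegree ≤ n + 1 := (cn_td i a g).trans hle
    have hre : ∀ s' : Fin m → F,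
        eval s' (bind₁ (cnF i a) g) = eval (Function.update s' i a) g := cn_eval i a g
    obtain ⟨h, hh⟩ := cn_dvd i a g
    set r := bind₁ (cnF i a) g with hrdef
    have hg : g = h * (X i - C a) + r := by linear_combination hh
    have hhne : h ≠ 0 := by
      rintro rfl
      rw [hg] at hcoeff
      simp [hcr] at hcoeff
    have hXi : h * X i = (g - r) + C a * h := by linear_combination -hg
    have htd1 : h.totalDegree + 1 ≤ max (n+1) h.totalDegree := by
      calc h.totalDegree + 1 ≤ (h * X i).totalDegree := td_mul_X hhne i
        _ = ((g - r) + C a * h).totalDegree := by rw [hXi]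
        _ ≤ max ((g - r).totalDegree) ((C a * h).totalDegree) := totalDegree_add _ _
        _ ≤ max (n+1) h.totalDegree := by
            apply max_le_max
            · exact (totalDegree_sub _ _).trans (max_le hle hrtd)
            · rw [C_mul']; exact totalDegree_smul_le _ _
    have hhtd : h.totalDegree ≤ n := by
      rcases max_cases (n+1) h.totalDegree with ⟨he, _⟩ | ⟨he, _⟩ <;> omega
    -- new exponents and sets
    set t' : Fin m → ℕ := Function.update t i (t i - 1) with ht'def
    have hsum' : ∑ j, t' j = n := by
      rw [ht'def, Finset.sum_update_of_mem (Finset.mem_univ i),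
        Finset.sdiff_singleton_eq_erase]
      have h2 := Finset.add_sum_erase Finset.univ t (Finset.mem_univ i)
      omega
    set S' : Fin m → Finset F := Function.update S i ((S i).erase a) with hS'def
    have hS' : ∀ j, t' j < (S' j).card := by
      intro j
      by_cases hj : j = i
      · subst hj
        rw [ht'def, hS'def, Function.update_self, Function.update_self,
          Finset.card_erase_of_mem ha]
        have := hS j; omega
      · rw [ht'def, hS'def, Function.update_of_ne hj, Function.update_of_ne hj]
        exact hS j
    have htf' : Finsupp.equivFunOnFinite.symm t' = tf - Finsupp.single i 1 := by
      ext j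
      have hL : (Finsupp.equivFunOnFinite.symm t') j = t' j := rfl
      rw [hL, Finsupp.tsub_apply, htfi, Finsupp.single_apply, ht'def]
      by_cases hj : j = i
      · subst hj; rw [Function.update_self, if_pos rfl]
      · rw [Function.update_of_ne hj, if_neg (fun he => hj he.symm), Nat.sub_zero]
    -- coefficient of h
    have hsupsum : ∑ j ∈ tf.support, tf j = n + 1 := by
      rw [Finset.sum_subset (Finset.subset_univ tf.support)
        (fun x _ hx => Finsupp.notMem_support_iff.mp hx)]
      simp only [htfi]
      exact hsum
    have hci : i ∈ tf.support := Finsupp.mem_support_iff.mpr (by rw [htfi]; exact hti)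
    have e1 : coeff tf (h * X i) = coeff (tf - Finsupp.single i 1) h := by
      rw [coeff_mul_X', if_pos hci]
    have e3 : coeff tf h = 0 := by
      apply coeff_eq_zero_of_totalDegree_lt
      rw [hsupsum]; omega
    have e2 : coeff tf (h * C a) = 0 := by
      rw [mul_comm, C_mul', coeff_smul, e3, smul_zero]
    have hcoeff' : coeff (Finsupp.equivFunOnFinite.symm t') h ≠ 0 := by
      rw [htf']
      have key : coeff tf g = coeff (tf - Finsupp.single i 1) h := by
        rw [hg, coeff_add, hcr, add_zero, mul_sub, coeff_sub, e1, e2, sub_zero]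
      rw [← key]
      exact hcoeff
    -- apply induction hypothesis
    obtain ⟨s, hs, hse⟩ := ih h t' S' hhtd hsum' hcoeff' hS'
    have hsi : s i ∈ (S i).erase a := by
      have := hs i; rwa [hS'def, Function.update_self] at this
    have hsiS : s i ∈ S i := Finset.mem_of_mem_erase hsi
    have hsia : s i ≠ a := Finset.ne_of_mem_erase hsi
    have hsS : ∀ j, s j ∈ S j := by
      intro j
      by_cases hj : j = i
      · subst hj; exact hsiS
      · have := hs j; rwa [hS'def, Function.update_of_ne hj] at this
    have he : eval s g = eval s h * (s i - a) + eval s r := by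
      conv_lhs => rw [hg]
      simp
    by_cases hgs : eval s g = 0
    · refine ⟨Function.update s i a, ?_, ?_⟩
      · intro j
        by_cases hj : j = i
        · subst hj; rw [Function.update_self]; exact ha
        · rw [Function.update_of_ne hj]; exact hsS j
      · rw [← hre s]
        intro h0
        have hA : eval s h * (s i - a) = 0 := by linear_combination hgs - he - h0
        exact mul_ne_zero hse (sub_ne_zero.mpr hsia) hA
    · exact ⟨s, hsS, hgs⟩

end CNAux

open MvPolynomial in
/-- Alon's Combinatorial Nullstellensatz: if `g ∈ F[x₁,…,x_m]` has total degree
`∑ tᵢ` and the coefficient of `∏ xᵢ^{tᵢ}` is nonzero, then for any sets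
`Sᵢ ⊆ F` with `|Sᵢ| > tᵢ` there is a point `s ∈ S₁ × ⋯ × S_m` with `g(s) ≠ 0`. -/
theorem combinatorial_nullstellensatz
    (F : Type*) [Field F] (m : ℕ) (g : MvPolynomial (Fin m) F) (t : Fin m → ℕ)
    (hdeg : g.totalDegree = ∑ i, t i)
    (hcoeff : coeff (Finsupp.equivFunOnFinite.symm t) g ≠ 0)
    (S : Fin m → Finset F) (hS : ∀ i, t i < (S i).card) :
    ∃ s : Fin m → F, (∀ i, s i ∈ S i) ∧ eval s g ≠ 0 :=
  CNAux.cn_main (∑ i, t i) g t S (le_of_eq hdeg) rfl hcoeff hS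
end
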